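/- arXiv:2510.23844 — 4 statements merged into one kernel-verified Lean document; each statement's English description precedes it below -/
import Mathlib

section
/- Let c > 0, β ∈ ℝ, σ₁, σ₂ ≥ 0, and ρ ∈ [-1, 1]. Let F, G : ℤ → ℂ be finitely supported. Then Σ_{q ∈ ℤ} Σ_{r ∈ ℤ} F_q G_r e^{i (q + r) π β / c} exp(-(π²/(2c²)) (σ₁² q² + 2 σ₁ σ₂ q r ρ + σ₂² r²)) = Σ_{k=0}^{∞} [Σ_{q ∈ ℤ} F_q e^{i q π β / c} e^{-(π²/(2c²)) σ₁² q²} (q π / c)^k] · [Σ_{r ∈ ℤ} G_r e^{i r π β / c} e^{-(π²/(2c²)) σ₂² r²} (r π / c)^k] · ((-1)^k / k!) (σ₁ σ₂ ρ)^k, where the series over k on the right-hand side converges absolutely. -/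
open Complex Real

lemma exp_cpx_tsum (z : ℂ) : Complex.exp z = ∑' k : ℕ, z ^ k / k.factorial := by
  rw [Complex.exp_eq_exp_ℂ, NormedSpace.exp_eq_tsum_div]

lemma key (s t : Finset ℤ) (a b : ℤ → ℂ) (x y : ℤ → ℝ) (τ : ℝ) :
    Summable (fun k : ℕ => ‖(∑ q ∈ s, a q * ((x q : ℝ) : ℂ) ^ k) *
        (∑ r ∈ t, b r * ((y r : ℝ) : ℂ) ^ k) * ((-1 : ℂ) ^ k / (k.factorial : ℂ)) *
        ((τ : ℝ) : ℂ) ^ k‖) ∧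
    (∑ q ∈ s, ∑ r ∈ t, a q * b r * Complex.exp (((-(x q * y r * τ) : ℝ) : ℂ))) =
      ∑' k : ℕ, (∑ q ∈ s, a q * ((x q : ℝ) : ℂ) ^ k) *
        (∑ r ∈ t, b r * ((y r : ℝ) : ℂ) ^ k) * ((-1 : ℂ) ^ k / (k.factorial : ℂ)) *
        ((τ : ℝ) : ℂ) ^ k := by
  have hterm : ∀ k : ℕ, (∑ q ∈ s, a q * ((x q : ℝ) : ℂ) ^ k) *
        (∑ r ∈ t, b r * ((y r : ℝ) : ℂ) ^ k) * ((-1 : ℂ) ^ k / (k.factorial : ℂ)) *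
        ((τ : ℝ) : ℂ) ^ k =
      ∑ q ∈ s, ∑ r ∈ t, a q * b r * ((-(x q * y r * τ) : ℂ)) ^ k / (k.factorial : ℂ) := by
    intro k
    rw [Finset.sum_mul_sum, Finset.sum_mul, Finset.sum_mul]
    refine Finset.sum_congr rfl fun q _ => ?_
    rw [Finset.sum_mul, Finset.sum_mul]
    refine Finset.sum_congr rfl fun r _ => ?_
    have : (-((x q : ℂ) * (y r : ℂ) * (τ : ℂ))) = (-1) * (x q : ℂ) * (y r : ℂ) * (τ : ℂ) := by
      ring
    rw [this, mul_pow, mul_pow, mul_pow]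
    ring
  have hsumqr : ∀ q r : ℤ, Summable (fun k : ℕ =>
      a q * b r * ((-(x q * y r * τ) : ℂ)) ^ k / (k.factorial : ℂ)) := by
    intro q r
    have := (NormedSpace.expSeries_div_summable ((-(x q * y r * τ) : ℂ)))
    simpa [mul_div_assoc] using this.mul_left (a q * b r)
  constructor
  · have hbnd : Summable (fun k : ℕ => ∑ q ∈ s, ∑ r ∈ t,
        ‖a q * b r * ((-(x q * y r * τ) : ℂ)) ^ k / (k.factorial : ℂ)‖) := by
      apply summable_sum
      intro q _
      apply summable_sum
      intro r _
      exact (hsumqr q r).norm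
    apply Summable.of_nonneg_of_le (fun k => norm_nonneg _) _ hbnd
    intro k
    rw [hterm k]
    exact (norm_sum_le _ _).trans (Finset.sum_le_sum fun q _ => norm_sum_le _ _)
  · rw [tsum_congr hterm]
    rw [Summable.tsum_finsetSum (fun q _ => summable_sum (fun r _ => hsumqr q r))]
    refine Finset.sum_congr rfl fun q _ => ?_
    rw [Summable.tsum_finsetSum (fun r _ => hsumqr q r)]
    refine Finset.sum_congr rfl fun r _ => ?_
    rw [exp_cpx_tsum, ← tsum_mul_left]
    refine tsum_congr fun k => ?_
    push_cast
    ring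

/-- Decomposition of the Gaussian-weighted double Fourier sum into an absolutely
convergent power series in the correlation coefficient `ρ`. -/
theorem stmt_2
    (c : ℝ) (hc : 0 < c) (β : ℝ) (σ₁ σ₂ : ℝ) (hσ₁ : 0 ≤ σ₁) (hσ₂ : 0 ≤ σ₂)
    (ρ : ℝ) (hρ : ρ ∈ Set.Icc (-1 : ℝ) 1)
    (F G : ℤ → ℂ) (hF : (Function.support F).Finite) (hG : (Function.support G).Finite) :
    Summable (fun k : ℕ =>
      ‖(∑' q : ℤ, F q * Complex.exp (Complex.I * ((q : ℂ) * (Real.pi : ℂ) * (β : ℂ) / (c : ℂ))) *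
            (Real.exp (-(Real.pi ^ 2 / (2 * c ^ 2)) * (σ₁ ^ 2 * (q : ℝ) ^ 2)) : ℂ) *
            (((q : ℝ) * Real.pi / c : ℝ) : ℂ) ^ k) *
        (∑' r : ℤ, G r * Complex.exp (Complex.I * ((r : ℂ) * (Real.pi : ℂ) * (β : ℂ) / (c : ℂ))) *
            (Real.exp (-(Real.pi ^ 2 / (2 * c ^ 2)) * (σ₂ ^ 2 * (r : ℝ) ^ 2)) : ℂ) *
            (((r : ℝ) * Real.pi / c : ℝ) : ℂ) ^ k) *
        ((-1 : ℂ) ^ k / (k.factorial : ℂ)) * ((σ₁ * σ₂ * ρ : ℝ) : ℂ) ^ k‖) ∧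
    (∑' q : ℤ, ∑' r : ℤ, F q * G r *
        Complex.exp (Complex.I * (((q : ℂ) + (r : ℂ)) * (Real.pi : ℂ) * (β : ℂ) / (c : ℂ))) *
        (Real.exp (-(Real.pi ^ 2 / (2 * c ^ 2)) *
          (σ₁ ^ 2 * (q : ℝ) ^ 2 + 2 * σ₁ * σ₂ * (q : ℝ) * (r : ℝ) * ρ + σ₂ ^ 2 * (r : ℝ) ^ 2)) : ℂ)) =
      ∑' k : ℕ,
        (∑' q : ℤ, F q * Complex.exp (Complex.I * ((q : ℂ) * (Real.pi : ℂ) * (β : ℂ) / (c : ℂ))) *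
            (Real.exp (-(Real.pi ^ 2 / (2 * c ^ 2)) * (σ₁ ^ 2 * (q : ℝ) ^ 2)) : ℂ) *
            (((q : ℝ) * Real.pi / c : ℝ) : ℂ) ^ k) *
        (∑' r : ℤ, G r * Complex.exp (Complex.I * ((r : ℂ) * (Real.pi : ℂ) * (β : ℂ) / (c : ℂ))) *
            (Real.exp (-(Real.pi ^ 2 / (2 * c ^ 2)) * (σ₂ ^ 2 * (r : ℝ) ^ 2)) : ℂ) *
            (((r : ℝ) * Real.pi / c : ℝ) : ℂ) ^ k) *
        ((-1 : ℂ) ^ k / (k.factorial : ℂ)) * ((σ₁ * σ₂ * ρ : ℝ) : ℂ) ^ k := by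
  classical
  set s : Finset ℤ := hF.toFinset with hs
  set t : Finset ℤ := hG.toFinset with ht
  set a : ℤ → ℂ := fun q =>
    F q * Complex.exp (Complex.I * ((q : ℂ) * (Real.pi : ℂ) * (β : ℂ) / (c : ℂ))) *
      (Real.exp (-(Real.pi ^ 2 / (2 * c ^ 2)) * (σ₁ ^ 2 * (q : ℝ) ^ 2)) : ℂ) with ha
  set b : ℤ → ℂ := fun r =>
    G r * Complex.exp (Complex.I * ((r : ℂ) * (Real.pi : ℂ) * (β : ℂ) / (c : ℂ))) *
      (Real.exp (-(Real.pi ^ 2 / (2 * c ^ 2)) * (σ₂ ^ 2 * (r : ℝ) ^ 2)) : ℂ) with hb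
  set x : ℤ → ℝ := fun q => (q : ℝ) * Real.pi / c with hx
  set y : ℤ → ℝ := fun r => (r : ℝ) * Real.pi / c with hy
  have hFz : ∀ q : ℤ, q ∉ s → F q = 0 := fun q hq => by
    simpa [hs, Function.mem_support] using fun h => (hq (hF.mem_toFinset.2 h))
  have hGz : ∀ r : ℤ, r ∉ t → G r = 0 := fun r hr => by
    simpa [ht, Function.mem_support] using fun h => (hr (hG.mem_toFinset.2 h))
  have hA : ∀ k : ℕ, (∑' q : ℤ,
      F q * Complex.exp (Complex.I * ((q : ℂ) * (Real.pi : ℂ) * (β : ℂ) / (c : ℂ))) *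
        (Real.exp (-(Real.pi ^ 2 / (2 * c ^ 2)) * (σ₁ ^ 2 * (q : ℝ) ^ 2)) : ℂ) *
        (((q : ℝ) * Real.pi / c : ℝ) : ℂ) ^ k) = ∑ q ∈ s, a q * ((x q : ℝ) : ℂ) ^ k := by
    intro k
    exact tsum_eq_sum (fun q hq => by simp [ha, hFz q hq])
  have hB : ∀ k : ℕ, (∑' r : ℤ,
      G r * Complex.exp (Complex.I * ((r : ℂ) * (Real.pi : ℂ) * (β : ℂ) / (c : ℂ))) *
        (Real.exp (-(Real.pi ^ 2 / (2 * c ^ 2)) * (σ₂ ^ 2 * (r : ℝ) ^ 2)) : ℂ) *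
        (((r : ℝ) * Real.pi / c : ℝ) : ℂ) ^ k) = ∑ r ∈ t, b r * ((y r : ℝ) : ℂ) ^ k := by
    intro k
    exact tsum_eq_sum (fun r hr => by simp [hb, hGz r hr])
  obtain ⟨hS, hE⟩ := key s t a b x y (σ₁ * σ₂ * ρ)
  have hcne : c ≠ 0 := hc.ne'
  have hterm : ∀ q r : ℤ, F q * G r *
      Complex.exp (Complex.I * (((q : ℂ) + (r : ℂ)) * (Real.pi : ℂ) * (β : ℂ) / (c : ℂ))) *
      (Real.exp (-(Real.pi ^ 2 / (2 * c ^ 2)) *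
        (σ₁ ^ 2 * (q : ℝ) ^ 2 + 2 * σ₁ * σ₂ * (q : ℝ) * (r : ℝ) * ρ + σ₂ ^ 2 * (r : ℝ) ^ 2)) : ℂ) =
      a q * b r * Complex.exp (((-(x q * y r * (σ₁ * σ₂ * ρ)) : ℝ) : ℂ)) := by
    intro q r
    have e1 : Complex.exp (Complex.I * (((q : ℂ) + (r : ℂ)) * (Real.pi : ℂ) * (β : ℂ) / (c : ℂ)))
        = Complex.exp (Complex.I * ((q : ℂ) * (Real.pi : ℂ) * (β : ℂ) / (c : ℂ))) *
          Complex.exp (Complex.I * ((r : ℂ) * (Real.pi : ℂ) * (β : ℂ) / (c : ℂ))) := by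
      rw [← Complex.exp_add]; congr 1; ring
    have e2 : (Real.exp (-(Real.pi ^ 2 / (2 * c ^ 2)) *
          (σ₁ ^ 2 * (q : ℝ) ^ 2 + 2 * σ₁ * σ₂ * (q : ℝ) * (r : ℝ) * ρ + σ₂ ^ 2 * (r : ℝ) ^ 2)) : ℂ)
        = (Real.exp (-(Real.pi ^ 2 / (2 * c ^ 2)) * (σ₁ ^ 2 * (q : ℝ) ^ 2)) : ℂ) *
          (Real.exp (-(Real.pi ^ 2 / (2 * c ^ 2)) * (σ₂ ^ 2 * (r : ℝ) ^ 2)) : ℂ) *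
          Complex.exp (((-(x q * y r * (σ₁ * σ₂ * ρ)) : ℝ) : ℂ)) := by
      rw [← Complex.ofReal_exp, ← Complex.ofReal_mul, ← Complex.ofReal_mul,
        ← Real.exp_add, ← Real.exp_add]
      norm_cast
      congr 1
      rw [hx, hy]; field_simp
      ring
    rw [e1, e2, ha, hb, hx, hy]
    ring
  refine ⟨?_, ?_⟩
  · have : (fun k : ℕ =>
      ‖(∑' q : ℤ, F q * Complex.exp (Complex.I * ((q : ℂ) * (Real.pi : ℂ) * (β : ℂ) / (c : ℂ))) *
            (Real.exp (-(Real.pi ^ 2 / (2 * c ^ 2)) * (σ₁ ^ 2 * (q : ℝ) ^ 2)) : ℂ) *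
            (((q : ℝ) * Real.pi / c : ℝ) : ℂ) ^ k) *
        (∑' r : ℤ, G r * Complex.exp (Complex.I * ((r : ℂ) * (Real.pi : ℂ) * (β : ℂ) / (c : ℂ))) *
            (Real.exp (-(Real.pi ^ 2 / (2 * c ^ 2)) * (σ₂ ^ 2 * (r : ℝ) ^ 2)) : ℂ) *
            (((r : ℝ) * Real.pi / c : ℝ) : ℂ) ^ k) *
        ((-1 : ℂ) ^ k / (k.factorial : ℂ)) * ((σ₁ * σ₂ * ρ : ℝ) : ℂ) ^ k‖) =
      fun k : ℕ => ‖(∑ q ∈ s, a q * ((x q : ℝ) : ℂ) ^ k) *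
        (∑ r ∈ t, b r * ((y r : ℝ) : ℂ) ^ k) * ((-1 : ℂ) ^ k / (k.factorial : ℂ)) *
        ((σ₁ * σ₂ * ρ : ℝ) : ℂ) ^ k‖ := funext fun k => by rw [hA k, hB k]
    rw [this]
    exact hS
  · have lhs_eq : (∑' q : ℤ, ∑' r : ℤ, F q * G r *
        Complex.exp (Complex.I * (((q : ℂ) + (r : ℂ)) * (Real.pi : ℂ) * (β : ℂ) / (c : ℂ))) *
        (Real.exp (-(Real.pi ^ 2 / (2 * c ^ 2)) *
          (σ₁ ^ 2 * (q : ℝ) ^ 2 + 2 * σ₁ * σ₂ * (q : ℝ) * (r : ℝ) * ρ + σ₂ ^ 2 * (r : ℝ) ^ 2)) : ℂ))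
        = ∑ q ∈ s, ∑ r ∈ t, a q * b r *
            Complex.exp (((-(x q * y r * (σ₁ * σ₂ * ρ)) : ℝ) : ℂ)) := by
      rw [tsum_eq_sum (s := s) (fun q hq => by
        simp only [hFz q hq, zero_mul]
        exact tsum_zero)]
      refine Finset.sum_congr rfl fun q _ => ?_
      rw [tsum_eq_sum (s := t) (fun r hr => by simp [hGz r hr])]
      exact Finset.sum_congr rfl fun r _ => hterm q r
    rw [lhs_eq, hE]
    exact tsum_congr fun k => by rw [hA k, hB k]
end

section
/- Let c > 0, σ ≥ 0, β ∈ ℝ, and ρ ∈ [-1, 1]. Let Z₁ and Z₂ be independent standard Gaussian random variables and define X = β + σ Z₁ and Y = β + σ (ρ Z₁ + √(1 - ρ²) Z₂). Let F : ℤ → ℂ be finitely supported and let f(x) = Σ_{λ ∈ ℤ} F_λ e^{i λ π x / c} (a finite trigonometric polynomial). Define h_k = i^k Σ_{λ ∈ ℤ} F_λ e^{i λ π β / c} e^{-(π²/(2c²)) σ² λ²} (λ π / c)^k for each k ∈ ℕ. Then E[f(X) · f(Y)] = Σ_{k=0}^{∞} h_k² · σ^{2k} ρ^k / k!, with the series converging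 absolutely. -/
open MeasureTheory ProbabilityTheory Complex Real
open scoped NNReal ENNReal

lemma gauss_char_aux (u : ℝ) :
    ∫ x : ℝ, Complex.exp (Complex.I * ((u * x : ℝ) : ℂ)) ∂(gaussianReal 0 1) =
      (Real.exp (-(u ^ 2) / 2) : ℂ) := by
  rw [gaussianReal_of_var_ne_zero 0 one_ne_zero]
  have hmeas : Measurable fun x : ℝ => Real.toNNReal (gaussianPDFReal 0 1 x) :=
    (measurable_gaussianPDFReal 0 1).real_toNNReal
  have hpdf : (gaussianPDF 0 1) =
      fun x => ((Real.toNNReal (gaussianPDFReal 0 1 x) : ℝ≥0) : ℝ≥0∞) := rfl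
  rw [hpdf, integral_withDensity_eq_integral_smul hmeas]
  have h1 : ∀ x : ℝ,
      (Real.toNNReal (gaussianPDFReal 0 1 x)) • Complex.exp (Complex.I * ((u * x : ℝ) : ℂ))
        = (((Real.sqrt (2 * π))⁻¹ : ℝ) : ℂ) *
          Complex.exp ((((-(1/2) : ℝ)) : ℂ) * (x : ℂ) ^ 2 + (Complex.I * u) * x + 0) := by
    intro x
    have hv : ((Real.toNNReal (gaussianPDFReal 0 1 x) : ℝ)) =
        (Real.sqrt (2 * π))⁻¹ * Real.exp (-x ^ 2 / 2) := by
      rw [Real.coe_toNNReal _ (gaussianPDFReal_nonneg 0 1 x), gaussianPDFReal]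
      norm_num
    rw [NNReal.smul_def, Complex.real_smul, hv]
    push_cast
    rw [mul_assoc, ← Complex.exp_add]
    congr 1
    push_cast
    try ring
  simp_rw [h1]
  rw [integral_const_mul, integral_cexp_quadratic (by norm_num) (Complex.I * u) 0]
  have harg : (0 : ℂ) - (Complex.I * u) ^ 2 / (4 * (((-(1/2) : ℝ)) : ℂ)) =
      ((-(u ^ 2) / 2 : ℝ) : ℂ) := by
    push_cast
    rw [mul_pow, Complex.I_sq]
    ring
  rw [harg]
  have hconst : ((((Real.sqrt (2 * π))⁻¹ : ℝ)) : ℂ) *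
      ((π : ℂ) / -(((-(1/2) : ℝ)) : ℂ)) ^ (1 / 2 : ℂ) = 1 := by
    have h2 : ((π : ℂ) / -(((-(1/2) : ℝ)) : ℂ)) = (((2 * π : ℝ)) : ℂ) := by
      push_cast; ring
    have h3 : (1 / 2 : ℂ) = ((1 / 2 : ℝ) : ℂ) := by norm_num
    rw [h2, h3, ← Complex.ofReal_cpow (by positivity), ← Real.sqrt_eq_rpow,
      ← Complex.ofReal_mul, inv_mul_cancel₀ (by positivity)]
    norm_num
  rw [← mul_assoc, hconst, one_mul, ← Complex.ofReal_exp]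

lemma joint_char_aux {Ω : Type*} [MeasurableSpace Ω] (μ : Measure Ω) [IsProbabilityMeasure μ]
    (Z₁ Z₂ : Ω → ℝ) (hZ₁ : Measurable Z₁) (hZ₂ : Measurable Z₂)
    (hlaw₁ : μ.map Z₁ = gaussianReal 0 1) (hlaw₂ : μ.map Z₂ = gaussianReal 0 1)
    (hindep : IndepFun Z₁ Z₂ μ) (p q : ℝ) :
    ∫ ω, Complex.exp (Complex.I * ((p * Z₁ ω : ℝ) : ℂ)) *
        Complex.exp (Complex.I * ((q * Z₂ ω : ℝ) : ℂ)) ∂μ =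
      ((Real.exp (-(p ^ 2) / 2) * Real.exp (-(q ^ 2) / 2) : ℝ) : ℂ) := by
  have hmap : μ.map (fun ω => (Z₁ ω, Z₂ ω)) = (gaussianReal 0 1).prod (gaussianReal 0 1) := by
    rw [(indepFun_iff_map_prod_eq_prod_map_map hZ₁.aemeasurable hZ₂.aemeasurable).mp hindep,
      hlaw₁, hlaw₂]
  have hcont : Continuous fun z : ℝ × ℝ =>
      Complex.exp (Complex.I * ((p * z.1 : ℝ) : ℂ)) *
        Complex.exp (Complex.I * ((q * z.2 : ℝ) : ℂ)) := by fun_prop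
  have h1 : ∫ ω, Complex.exp (Complex.I * ((p * Z₁ ω : ℝ) : ℂ)) *
        Complex.exp (Complex.I * ((q * Z₂ ω : ℝ) : ℂ)) ∂μ
      = ∫ z : ℝ × ℝ, Complex.exp (Complex.I * ((p * z.1 : ℝ) : ℂ)) *
        Complex.exp (Complex.I * ((q * z.2 : ℝ) : ℂ)) ∂(μ.map (fun ω => (Z₁ ω, Z₂ ω))) :=
    (integral_map (hZ₁.prodMk hZ₂).aemeasurable hcont.aestronglyMeasurable).symm
  rw [h1, hmap,
    integral_prod_mul (f := fun x : ℝ => Complex.exp (Complex.I * ((p * x : ℝ) : ℂ)))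
      (g := fun y : ℝ => Complex.exp (Complex.I * ((q * y : ℝ) : ℂ))),
    gauss_char_aux, gauss_char_aux, ← Complex.ofReal_mul]

set_option maxHeartbeats 2000000 in
/-- For a finite trigonometric polynomial nonlinearity `f` driven by a jointly Gaussian
pair with common mean `β`, common variance `σ²` and correlation coefficient `ρ`, the
output correlation `E[f(X) ⬝ f(Y)]` equals the absolutely convergent power series
`Σₖ hₖ² σ^(2k) ρᵏ / k!`. -/
theorem stmt_3
    {Ω : Type*} [MeasurableSpace Ω] (μ : Measure Ω) [IsProbabilityMeasure μ]
    (c : ℝ) (hc : 0 < c) (σ : ℝ) (hσ : 0 ≤ σ) (β : ℝ)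
    (ρ : ℝ) (hρ : ρ ∈ Set.Icc (-1 : ℝ) 1)
    (Z₁ Z₂ : Ω → ℝ) (hZ₁ : Measurable Z₁) (hZ₂ : Measurable Z₂)
    (hlaw₁ : μ.map Z₁ = gaussianReal 0 1)
    (hlaw₂ : μ.map Z₂ = gaussianReal 0 1)
    (hindep : IndepFun Z₁ Z₂ μ)
    (X Y : Ω → ℝ)
    (hX : X = fun ω => β + σ * Z₁ ω)
    (hY : Y = fun ω => β + σ * (ρ * Z₁ ω + Real.sqrt (1 - ρ ^ 2) * Z₂ ω))
    (F : ℤ → ℂ) (hF : (Function.support F).Finite)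
    (f : ℝ → ℂ)
    (hf : ∀ x : ℝ, f x =
      ∑' l : ℤ, F l * Complex.exp (Complex.I * ((l : ℂ) * (Real.pi : ℂ) * (x : ℂ) / (c : ℂ))))
    (h : ℕ → ℂ)
    (hh : ∀ k : ℕ, h k = Complex.I ^ k *
      ∑' l : ℤ, F l * Complex.exp (Complex.I * ((l : ℂ) * (Real.pi : ℂ) * (β : ℂ) / (c : ℂ))) *
        (Real.exp (-(Real.pi ^ 2 / (2 * c ^ 2)) * (σ ^ 2 * (l : ℝ) ^ 2)) : ℂ) *
        (((l : ℝ) * Real.pi / c : ℝ) : ℂ) ^ k) :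
    Summable (fun k : ℕ => ‖h k ^ 2 * ((σ ^ (2 * k) * ρ ^ k / k.factorial : ℝ) : ℂ)‖) ∧
    (∫ ω, f (X ω) * f (Y ω) ∂μ) =
      ∑' k : ℕ, h k ^ 2 * ((σ ^ (2 * k) * ρ ^ k / k.factorial : ℝ) : ℂ) := by
  have hc' : c ≠ 0 := ne_of_gt hc
  set s : Finset ℤ := hF.toFinset with hs
  have hs0 : ∀ l : ℤ, l ∉ s → F l = 0 := by
    intro l hl
    by_contra hne
    exact hl (hF.mem_toFinset.mpr hne)
  set t : ℤ → ℝ := fun l => l * Real.pi / c with ht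
  set A : ℤ → ℂ := fun l => F l * Complex.exp (Complex.I * ((t l * β : ℝ) : ℂ)) *
      ((Real.exp (-(σ ^ 2 * t l ^ 2) / 2) : ℝ) : ℂ) with hA
  set w : ℤ → ℤ → ℝ := fun l m => -(σ ^ 2 * ρ * (t l * t m)) with hw
  -- measurability
  have hXm : Measurable X := by rw [hX]; fun_prop
  have hYm : Measurable Y := by rw [hY]; fun_prop
  -- finite-sum representation of f
  have hfx : ∀ x : ℝ, f x = ∑ l ∈ s, F l * Complex.exp (Complex.I * ((t l * x : ℝ) : ℂ)) := by
    intro x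
    rw [hf x, tsum_eq_sum (s := s) (fun l hl => by rw [hs0 l hl, zero_mul])]
    refine Finset.sum_congr rfl fun l _ => ?_
    congr 2
    rw [ht]
    push_cast
    ring
  -- finite-sum representation of h
  have hhk : ∀ k : ℕ, h k = Complex.I ^ k * ∑ l ∈ s, A l * ((t l : ℝ) : ℂ) ^ k := by
    intro k
    rw [hh k]
    congr 1
    rw [tsum_eq_sum (s := s) (fun l hl => by rw [hs0 l hl]; simp)]
    refine Finset.sum_congr rfl fun l _ => ?_
    rw [hA]
    simp only
    congr 3
    · congr 1
      rw [ht]; push_cast; ring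
    · congr 1
      rw [ht]; field_simp
  -- integrability of each term
  have hint : ∀ l m : ℤ, Integrable (fun ω =>
      (F l * Complex.exp (Complex.I * ((t l * X ω : ℝ) : ℂ))) *
      (F m * Complex.exp (Complex.I * ((t m * Y ω : ℝ) : ℂ)))) μ := by
    intro l m
    have hmeas : Measurable (fun ω =>
        (F l * Complex.exp (Complex.I * ((t l * X ω : ℝ) : ℂ))) *
        (F m * Complex.exp (Complex.I * ((t m * Y ω : ℝ) : ℂ)))) := by fun_prop
    refine (integrable_const (‖F l‖ * ‖F m‖)).mono' hmeas.aestronglyMeasurable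
      (ae_of_all _ fun ω => ?_)
    have hre : ∀ r : ℝ, ‖Complex.exp (Complex.I * (r : ℂ))‖ = 1 := by
      intro r
      rw [Complex.norm_exp]
      simp
    rw [norm_mul, norm_mul, norm_mul, hre, hre, mul_one, mul_one]
  -- value of each pair integral
  have hpair : ∀ l m : ℤ, (∫ ω, (F l * Complex.exp (Complex.I * ((t l * X ω : ℝ) : ℂ))) *
      (F m * Complex.exp (Complex.I * ((t m * Y ω : ℝ) : ℂ))) ∂μ)
      = A l * A m * ((Real.exp (w l m) : ℝ) : ℂ) := by
    intro l m
    set p : ℝ := σ * (t l + ρ * t m) with hp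
    set q : ℝ := σ * (t m * Real.sqrt (1 - ρ ^ 2)) with hq
    have hsq : Real.sqrt (1 - ρ ^ 2) ^ 2 = 1 - ρ ^ 2 :=
      Real.sq_sqrt (by nlinarith [hρ.1, hρ.2])
    have hptw : ∀ ω, (F l * Complex.exp (Complex.I * ((t l * X ω : ℝ) : ℂ))) *
        (F m * Complex.exp (Complex.I * ((t m * Y ω : ℝ) : ℂ)))
        = (F l * F m * Complex.exp (Complex.I * (((t l + t m) * β : ℝ) : ℂ))) *
          (Complex.exp (Complex.I * ((p * Z₁ ω : ℝ) : ℂ)) *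
           Complex.exp (Complex.I * ((q * Z₂ ω : ℝ) : ℂ))) := by
      intro ω
      have e1 : Complex.exp (Complex.I * ((t l * X ω : ℝ) : ℂ)) *
          Complex.exp (Complex.I * ((t m * Y ω : ℝ) : ℂ))
          = Complex.exp (Complex.I * (((t l + t m) * β : ℝ) : ℂ)) *
            (Complex.exp (Complex.I * ((p * Z₁ ω : ℝ) : ℂ)) *
             Complex.exp (Complex.I * ((q * Z₂ ω : ℝ) : ℂ))) := by
        rw [← Complex.exp_add, ← Complex.exp_add, ← Complex.exp_add]
        congr 1
        rw [hX, hY, hp, hq]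
        push_cast
        ring
      calc (F l * Complex.exp (Complex.I * ((t l * X ω : ℝ) : ℂ))) *
          (F m * Complex.exp (Complex.I * ((t m * Y ω : ℝ) : ℂ)))
          = F l * F m * (Complex.exp (Complex.I * ((t l * X ω : ℝ) : ℂ)) *
            Complex.exp (Complex.I * ((t m * Y ω : ℝ) : ℂ))) := by ring
        _ = _ := by rw [e1]; ring
    simp_rw [hptw]
    rw [integral_const_mul, joint_char_aux μ Z₁ Z₂ hZ₁ hZ₂ hlaw₁ hlaw₂ hindep p q]
    -- now pure algebra
    have hexp : Real.exp (-p ^ 2 / 2) * Real.exp (-q ^ 2 / 2)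
        = Real.exp (-(σ ^ 2 * t l ^ 2) / 2) * Real.exp (-(σ ^ 2 * t m ^ 2) / 2) *
          Real.exp (w l m) := by
      rw [← Real.exp_add, ← Real.exp_add, ← Real.exp_add]
      congr 1
      rw [hp, hq, hw]
      simp only
      linear_combination (-(σ ^ 2 * t m ^ 2) / 2) * hsq
    have hbeta : Complex.exp (Complex.I * (((t l + t m) * β : ℝ) : ℂ))
        = Complex.exp (Complex.I * ((t l * β : ℝ) : ℂ)) *
          Complex.exp (Complex.I * ((t m * β : ℝ) : ℂ)) := by
      rw [← Complex.exp_add]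
      congr 1
      push_cast
      ring
    rw [hexp, hbeta, hA]
    simp only
    push_cast
    ring
  -- LHS as a finite double sum
  have hLHS : (∫ ω, f (X ω) * f (Y ω) ∂μ)
      = ∑ l ∈ s, ∑ m ∈ s, A l * A m * ((Real.exp (w l m) : ℝ) : ℂ) := by
    have hptw : ∀ ω, f (X ω) * f (Y ω) = ∑ l ∈ s, ∑ m ∈ s,
        (F l * Complex.exp (Complex.I * ((t l * X ω : ℝ) : ℂ))) *
        (F m * Complex.exp (Complex.I * ((t m * Y ω : ℝ) : ℂ))) := by
      intro ω
      rw [hfx (X ω), hfx (Y ω), Finset.sum_mul_sum]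
    simp_rw [hptw]
    rw [integral_finset_sum s (fun l _ => integrable_finset_sum s (fun m _ => hint l m))]
    refine Finset.sum_congr rfl fun l _ => ?_
    rw [integral_finset_sum s (fun m _ => hint l m)]
    exact Finset.sum_congr rfl fun m _ => hpair l m
  -- each series term as a finite double sum
  have hterm : ∀ k : ℕ, h k ^ 2 * ((σ ^ (2 * k) * ρ ^ k / k.factorial : ℝ) : ℂ)
      = ∑ l ∈ s, ∑ m ∈ s, A l * A m * (((w l m : ℝ) : ℂ) ^ k / (k.factorial : ℂ)) := by
    intro k
    rw [hhk k, mul_pow, sq (∑ l ∈ s, A l * ((t l : ℝ) : ℂ) ^ k), Finset.sum_mul_sum,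
      ← pow_mul, mul_comm k 2, pow_mul, Complex.I_sq]
    simp only [Finset.sum_mul, Finset.mul_sum]
    refine Finset.sum_congr rfl fun l _ => ?_
    refine Finset.sum_congr rfl fun m _ => ?_
    have hwpow : (((w l m : ℝ)) : ℂ) ^ k
        = (-1 : ℂ) ^ k * ((σ : ℂ) ^ 2) ^ k * (ρ : ℂ) ^ k * ((t l : ℝ) : ℂ) ^ k *
          ((t m : ℝ) : ℂ) ^ k := by
      rw [hw]
      simp only
      push_cast
      rw [show (-((σ : ℂ) ^ 2 * (ρ : ℂ) * ((t l : ℝ) * (t m : ℝ) : ℂ)) : ℂ)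
          = (-1) * (σ : ℂ) ^ 2 * (ρ : ℂ) * ((t l : ℝ) : ℂ) * ((t m : ℝ) : ℂ) by push_cast; ring]
      rw [mul_pow, mul_pow, mul_pow, mul_pow]
    rw [hwpow]
    push_cast
    rw [pow_mul]
    have hk0 : ((k.factorial : ℂ)) ≠ 0 := Nat.cast_ne_zero.mpr k.factorial_ne_zero
    field_simp
  -- summability of each exponential series term
  have hsummC : ∀ l m : ℤ, Summable (fun k : ℕ =>
      A l * A m * (((w l m : ℝ) : ℂ) ^ k / (k.factorial : ℂ))) := by
    intro l m
    exact (NormedSpace.expSeries_div_summable (((w l m : ℝ) : ℂ))).mul_left _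
  -- summability of norms
  have hsummable : Summable (fun k : ℕ =>
      ‖h k ^ 2 * ((σ ^ (2 * k) * ρ ^ k / k.factorial : ℝ) : ℂ)‖) := by
    refine Summable.of_nonneg_of_le (f := fun k => ∑ l ∈ s, ∑ m ∈ s,
        ‖A l * A m‖ * (|w l m| ^ k / (k.factorial : ℝ)))
      (fun k => norm_nonneg _) (fun k => ?_) ?_
    · rw [hterm k]
      refine le_trans (norm_sum_le _ _) (Finset.sum_le_sum fun l _ => ?_)
      refine le_trans (norm_sum_le _ _) (Finset.sum_le_sum fun m _ => ?_)
      apply le_of_eq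
      rw [norm_mul, norm_div, norm_pow, Complex.norm_real, Real.norm_eq_abs,
        Complex.norm_natCast]
    · refine summable_sum fun l _ => summable_sum fun m _ => ?_
      exact (Real.summable_pow_div_factorial (|w l m|)).mul_left _
  refine ⟨hsummable, ?_⟩
  -- RHS computation
  rw [tsum_congr hterm]
  rw [Summable.tsum_finsetSum (fun l _ => summable_sum (fun m _ => hsummC l m))]
  rw [hLHS]
  refine Finset.sum_congr rfl fun l _ => ?_
  rw [Summable.tsum_finsetSum (fun m _ => hsummC l m)]
  refine Finset.sum_congr rfl fun m _ => ?_
  rw [tsum_mul_left]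
  congr 1
  rw [show (∑' k : ℕ, ((w l m : ℝ) : ℂ) ^ k / (k.factorial : ℂ))
      = NormedSpace.exp (((w l m : ℝ) : ℂ)) from (congrFun (NormedSpace.exp_eq_tsum_div (𝔸 := ℂ)) _).symm]
  rw [← Complex.exp_eq_exp_ℂ, ← Complex.ofReal_exp]
end

section
/- Let Z₁ and Z₂ be independent standard Gaussian random variables, let ρ ∈ [-1, 1], and define X = Z₁ and Y = ρ Z₁ + √(1 - ρ²) Z₂. Then E[sgn(X) · sgn(Y)] = (2/π) · arcsin(ρ), where sgn(x) equals 1 for x > 0, -1 for x < 0, and 0 for x = 0. -/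
open MeasureTheory ProbabilityTheory Real Set
open scoped NNReal ENNReal

set_option maxHeartbeats 1000000

namespace ArcsineAux

noncomputable def sg (x : ℝ) : ℝ := if 0 < x then 1 else if x < 0 then -1 else 0

lemma measurable_sg : Measurable sg := by
  unfold sg
  exact Measurable.ite (measurableSet_lt measurable_const measurable_id) measurable_const
    (Measurable.ite (measurableSet_lt measurable_id measurable_const) measurable_const
      measurable_const)

lemma sg_abs_le (x : ℝ) : |sg x| ≤ 1 := by
  unfold sg; split_ifs <;> norm_num

lemma sg_mul_of_pos {c : ℝ} (hc : 0 < c) (x : ℝ) : sg (c * x) = sg x := by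
  unfold sg
  rcases lt_trichotomy x 0 with h | h | h
  · rw [if_neg (by nlinarith), if_pos (by nlinarith), if_neg (not_lt.2 h.le), if_pos h]
  · simp [h]
  · rw [if_pos (by nlinarith), if_pos h]

lemma sg_pos {x : ℝ} (h : 0 < x) : sg x = 1 := if_pos h

lemma sg_neg {x : ℝ} (h : x < 0) : sg x = -1 := by
  unfold sg; rw [if_neg (not_lt.2 h.le), if_pos h]

lemma integral_gaussian_density (h : ℝ → ℝ) :
    ∫ x, h x ∂(gaussianReal 0 1) = ∫ x, gaussianPDFReal 0 1 x * h x := by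
  rw [gaussianReal_of_var_ne_zero 0 one_ne_zero]
  have heq : (gaussianPDF 0 1)
      = fun x => ((Real.toNNReal (gaussianPDFReal 0 1 x) : ℝ≥0) : ℝ≥0∞) := by
    funext x; rfl
  rw [heq, integral_withDensity_eq_integral_smul
    ((measurable_gaussianPDFReal 0 1).real_toNNReal) h]
  congr 1; funext x
  rw [NNReal.smul_def, Real.coe_toNNReal _ (gaussianPDFReal_nonneg 0 1 x), smul_eq_mul]

lemma g_mul (a b : ℝ) :
    gaussianPDFReal 0 1 a * gaussianPDFReal 0 1 b = (2 * π)⁻¹ * Real.exp (-(a ^ 2 + b ^ 2) / 2) := by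
  simp only [gaussianPDFReal, NNReal.coe_one, mul_one, sub_zero]
  rw [mul_mul_mul_comm, ← Real.exp_add, ← mul_inv,
    Real.mul_self_sqrt (by positivity)]
  congr 1
  ring

lemma r_integral : ∫ r in Ioi (0:ℝ), r * Real.exp (-r ^ 2 / 2) = 1 := by
  have A : ∀ x : ℝ, HasDerivAt (fun y : ℝ => -Real.exp (-y ^ 2 / 2))
      (x * Real.exp (-x ^ 2 / 2)) x := by
    intro x
    have h1 : HasDerivAt (fun y : ℝ => -y ^ 2 / 2) (-x) x := by
      have h0 := ((hasDerivAt_pow 2 x).neg).div_const 2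
      refine h0.congr_deriv ?_
      simp; ring
    have h2 := (h1.exp).neg
    refine h2.congr_deriv ?_
    ring
  have B : Filter.Tendsto (fun y : ℝ => -Real.exp (-y ^ 2 / 2)) Filter.atTop (nhds 0) := by
    rw [show (0:ℝ) = -0 by ring]
    refine Filter.Tendsto.neg ?_
    refine Real.tendsto_exp_atBot.comp ?_
    exact ((Filter.tendsto_neg_atTop_atBot.comp (Filter.tendsto_pow_atTop two_ne_zero))).atBot_div_const
      two_pos
  have hint : IntegrableOn (fun r : ℝ => r * Real.exp (-r ^ 2 / 2)) (Ioi 0) := by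
    have h3 := integrable_mul_exp_neg_mul_sq (b := 1/2) (by norm_num)
    refine (h3.congr ?_).integrableOn
    filter_upwards with x
    congr 1
    ring_nf
  have h4 := integral_Ioi_of_hasDerivAt_of_tendsto' (fun x _ => A x) hint B
  rw [h4]
  norm_num


lemma G_intervalIntegrable (θ a b : ℝ) :
    IntervalIntegrable (fun φ => sg (Real.cos φ) * sg (Real.cos (φ - θ))) volume a b := by
  apply IntervalIntegrable.mono_fun (intervalIntegrable_const (c := (1:ℝ)))
  · exact ((measurable_sg.comp Real.measurable_cos).mul
      (measurable_sg.comp (Real.measurable_cos.comp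
        (measurable_id.sub measurable_const)))).aestronglyMeasurable
  · filter_upwards with x
    rw [Real.norm_eq_abs, abs_mul, norm_one]
    exact mul_le_one₀ (sg_abs_le _) (abs_nonneg _) (sg_abs_le _)

lemma integral_Ioo_const_piece {a b c : ℝ} (hab : a ≤ b) (f : ℝ → ℝ)
    (h : ∀ x ∈ Ioo a b, f x = c) :
    ∫ x in a..b, f x = c * (b - a) := by
  rw [intervalIntegral.integral_of_le hab, integral_Ioc_eq_integral_Ioo,
    setIntegral_congr_fun measurableSet_Ioo h, setIntegral_const, Real.volume_real_Ioo_of_le hab,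
    smul_eq_mul, mul_comm]

lemma angle_integral (θ : ℝ) (h0 : 0 ≤ θ) (hπ : θ ≤ π) :
    ∫ φ in Ioo (-π) π, sg (Real.cos φ) * sg (Real.cos (φ - θ)) = 2 * π - 4 * θ := by
  have pi_pos := Real.pi_pos
  set G : ℝ → ℝ := fun φ => sg (Real.cos φ) * sg (Real.cos (φ - θ)) with hG
  have hper : Function.Periodic G (2 * π) := by
    intro x
    simp only [hG]
    rw [show x + 2 * π - θ = (x - θ) + 2 * π by ring, Real.cos_add_two_pi, Real.cos_add_two_pi]
  have hIoo : ∫ φ in Ioo (-π) π, G φ = ∫ φ in (-π)..(-π + 2 * π), G φ := by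
    rw [show (-π : ℝ) + 2 * π = π by ring, intervalIntegral.integral_of_le (by linarith),
      integral_Ioc_eq_integral_Ioo]
  have hshift := hper.intervalIntegral_add_eq (-π) (-(π/2))
  rw [hIoo, hshift]
  have e1 : (-(π/2) : ℝ) ≤ θ - π/2 := by linarith
  have e2 : (θ - π/2 : ℝ) ≤ π/2 := by linarith
  have e3 : (π/2 : ℝ) ≤ θ + π/2 := by linarith
  have e4 : (θ + π/2 : ℝ) ≤ -(π/2) + 2*π := by linarith
  have s1 := intervalIntegral.integral_add_adjacent_intervals (a := -(π/2)) (b := θ - π/2)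
    (c := -(π/2) + 2*π) (G_intervalIntegrable θ _ _) (G_intervalIntegrable θ _ _)
  have s2 := intervalIntegral.integral_add_adjacent_intervals (a := θ - π/2) (b := π/2)
    (c := -(π/2) + 2*π) (G_intervalIntegrable θ _ _) (G_intervalIntegrable θ _ _)
  have s3 := intervalIntegral.integral_add_adjacent_intervals (a := π/2) (b := θ + π/2)
    (c := -(π/2) + 2*π) (G_intervalIntegrable θ _ _) (G_intervalIntegrable θ _ _)
  rw [← s1, ← s2, ← s3]
  have p1 : ∫ x in (-(π/2))..(θ - π/2), G x = (-1) * (θ - π/2 - (-(π/2))) := by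
    apply integral_Ioo_const_piece e1
    intro x hx
    have hc1 : 0 < Real.cos x :=
      Real.cos_pos_of_mem_Ioo ⟨hx.1, lt_of_lt_of_le hx.2 e2⟩
    have hc2 : Real.cos (x - θ) < 0 := by
      rw [← Real.cos_neg, neg_sub]
      exact Real.cos_neg_of_pi_div_two_lt_of_lt (by linarith [hx.2]) (by linarith [hx.1])
    simp only [hG, sg_pos hc1, sg_neg hc2]; ring
  have p2 : ∫ x in (θ - π/2)..(π/2), G x = 1 * (π/2 - (θ - π/2)) := by
    apply integral_Ioo_const_piece e2
    intro x hx
    have hc1 : 0 < Real.cos x := Real.cos_pos_of_mem_Ioo ⟨by linarith [hx.1], hx.2⟩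
    have hc2 : 0 < Real.cos (x - θ) :=
      Real.cos_pos_of_mem_Ioo ⟨by linarith [hx.1], by linarith [hx.2]⟩
    simp only [hG, sg_pos hc1, sg_pos hc2]; ring
  have p3 : ∫ x in (π/2)..(θ + π/2), G x = (-1) * (θ + π/2 - π/2) := by
    apply integral_Ioo_const_piece e3
    intro x hx
    have hc1 : Real.cos x < 0 :=
      Real.cos_neg_of_pi_div_two_lt_of_lt hx.1 (by linarith [hx.2])
    have hc2 : 0 < Real.cos (x - θ) :=
      Real.cos_pos_of_mem_Ioo ⟨by linarith [hx.1], by linarith [hx.2]⟩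
    simp only [hG, sg_neg hc1, sg_pos hc2]; ring
  have p4 : ∫ x in (θ + π/2)..(-(π/2) + 2*π), G x = 1 * (-(π/2) + 2*π - (θ + π/2)) := by
    apply integral_Ioo_const_piece e4
    intro x hx
    have hc1 : Real.cos x < 0 :=
      Real.cos_neg_of_pi_div_two_lt_of_lt (by linarith [hx.1]) (by linarith [hx.2])
    have hc2 : Real.cos (x - θ) < 0 :=
      Real.cos_neg_of_pi_div_two_lt_of_lt (by linarith [hx.1]) (by linarith [hx.2])
    simp only [hG, sg_neg hc1, sg_neg hc2]; ring
  rw [p1, p2, p3, p4]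
  ring


lemma main (ρ : ℝ) (h1 : -1 ≤ ρ) (h2 : ρ ≤ 1) :
    ∫ p : ℝ × ℝ, sg p.1 * sg (ρ * p.1 + Real.sqrt (1 - ρ ^ 2) * p.2)
      ∂((gaussianReal 0 1).prod (gaussianReal 0 1)) = (2 / π) * Real.arcsin ρ := by
  have pi_pos := Real.pi_pos
  set s : ℝ := Real.sqrt (1 - ρ ^ 2) with hs
  set θ : ℝ := Real.arccos ρ with hθ
  have hθcos : Real.cos θ = ρ := Real.cos_arccos h1 h2
  have hθsin : Real.sin θ = s := by rw [hθ, Real.sin_arccos]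
  have hθ0 : 0 ≤ θ := Real.arccos_nonneg ρ
  have hθπ : θ ≤ π := Real.arccos_le_pi ρ
  set f : ℝ × ℝ → ℝ := fun p => sg p.1 * sg (ρ * p.1 + s * p.2) with hf
  have hfm : Measurable f := by
    exact (measurable_sg.comp measurable_fst).mul
      (measurable_sg.comp ((measurable_fst.const_mul ρ).add (measurable_snd.const_mul s)))
  have hfb : ∀ p : ℝ × ℝ, ‖f p‖ ≤ 1 := by
    intro p
    rw [Real.norm_eq_abs, hf, abs_mul]
    exact mul_le_one₀ (sg_abs_le _) (abs_nonneg _) (sg_abs_le _)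
  set g : ℝ → ℝ := gaussianPDFReal 0 1 with hg
  have hgm : Measurable g := measurable_gaussianPDFReal 0 1
  have hgnn : ∀ x, 0 ≤ g x := gaussianPDFReal_nonneg 0 1
  have hint : Integrable f ((gaussianReal 0 1).prod (gaussianReal 0 1)) := by
    refine Integrable.mono' (integrable_const 1) hfm.aestronglyMeasurable ?_
    filter_upwards with p using hfb p
  have hFint : Integrable (fun p : ℝ × ℝ => f p * (g p.1 * g p.2))
      ((volume : Measure ℝ).prod volume) := by
    refine Integrable.mono'
      ((integrable_gaussianPDFReal 0 1).mul_prod (integrable_gaussianPDFReal 0 1))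
      (hfm.mul ((hgm.comp measurable_fst).mul (hgm.comp measurable_snd))).aestronglyMeasurable ?_
    filter_upwards with p
    rw [norm_mul]
    calc ‖f p‖ * ‖g p.1 * g p.2‖ ≤ 1 * ‖g p.1 * g p.2‖ := by
          gcongr; exact hfb p
      _ = g p.1 * g p.2 := by
          rw [one_mul, Real.norm_eq_abs, abs_of_nonneg (mul_nonneg (hgnn _) (hgnn _))]
  have step1 : ∫ p : ℝ × ℝ, f p ∂((gaussianReal 0 1).prod (gaussianReal 0 1))
      = ∫ p : ℝ × ℝ, f p * (g p.1 * g p.2) := by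
    rw [integral_prod _ hint, Measure.volume_eq_prod, integral_prod _ hFint,
      integral_gaussian_density]
    congr 1
    funext x
    rw [integral_gaussian_density, ← integral_const_mul]
    congr 1
    funext y
    ring
  rw [step1]
  have step2 := integral_comp_polarCoord_symm (fun p : ℝ × ℝ => f p * (g p.1 * g p.2))
  rw [← step2, polarCoord_target]
  have step3 : ∫ p in Ioi (0:ℝ) ×ˢ Ioo (-π) π,
      p.1 • ((fun p : ℝ × ℝ => f p * (g p.1 * g p.2)) (polarCoord.symm p))
      = ∫ p in Ioi (0:ℝ) ×ˢ Ioo (-π) π,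
        (p.1 * Real.exp (-p.1 ^ 2 / 2)) *
          ((2 * π)⁻¹ * (sg (Real.cos p.2) * sg (Real.cos (p.2 - θ)))) := by
    refine setIntegral_congr_fun (measurableSet_Ioi.prod measurableSet_Ioo) ?_
    rintro ⟨r, φ⟩ ⟨hr, _⟩
    simp only [polarCoord_symm_apply, hf]
    have hr' : (0:ℝ) < r := hr
    have e1 : sg (r * Real.cos φ) = sg (Real.cos φ) := sg_mul_of_pos hr' _
    have e2 : ρ * (r * Real.cos φ) + s * (r * Real.sin φ) = r * Real.cos (φ - θ) := by
      rw [Real.cos_sub, ← hθcos, ← hθsin]; ring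
    have e3 : sg (r * Real.cos (φ - θ)) = sg (Real.cos (φ - θ)) := sg_mul_of_pos hr' _
    have e4 : g (r * Real.cos φ) * g (r * Real.sin φ)
        = (2 * π)⁻¹ * Real.exp (-r ^ 2 / 2) := by
      rw [hg, g_mul]
      have : (r * Real.cos φ) ^ 2 + (r * Real.sin φ) ^ 2 = r ^ 2 := by
        have h := Real.sin_sq_add_cos_sq φ
        nlinarith [h]
      rw [this]
    rw [e2, e1, e3, e4, smul_eq_mul]
    ring
  rw [step3, Measure.volume_eq_prod,
    setIntegral_prod_mul (μ := (volume : Measure ℝ)) (ν := (volume : Measure ℝ))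
      (f := fun r : ℝ => r * Real.exp (-r ^ 2 / 2))
      (g := fun φ : ℝ => (2 * π)⁻¹ * (sg (Real.cos φ) * sg (Real.cos (φ - θ)))),
    r_integral, one_mul, integral_const_mul, angle_integral θ hθ0 hθπ]
  have harcsin : Real.arcsin ρ = π / 2 - θ := by
    rw [hθ, Real.arccos_eq_pi_div_two_sub_arcsin]; ring
  rw [harcsin]
  field_simp
  ring

end ArcsineAux

/-- Arcsine law (Price's theorem for the hard limiter): for a zero-mean jointly Gaussian
pair with unit variances and correlation coefficient `ρ`,
`E[sgn(X) ⬝ sgn(Y)] = (2/π) arcsin ρ`. -/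
theorem stmt_6
    {Ω : Type*} [MeasurableSpace Ω] (μ : Measure Ω) [IsProbabilityMeasure μ]
    (Z₁ Z₂ : Ω → ℝ) (hZ₁ : Measurable Z₁) (hZ₂ : Measurable Z₂)
    (hlaw₁ : μ.map Z₁ = gaussianReal 0 1)
    (hlaw₂ : μ.map Z₂ = gaussianReal 0 1)
    (hindep : IndepFun Z₁ Z₂ μ)
    (ρ : ℝ) (hρ : ρ ∈ Set.Icc (-1 : ℝ) 1)
    (X Y : Ω → ℝ)
    (hX : X = Z₁)
    (hY : Y = fun ω => ρ * Z₁ ω + Real.sqrt (1 - ρ ^ 2) * Z₂ ω)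
    (sgn : ℝ → ℝ)
    (hsgn : ∀ x : ℝ, sgn x = if 0 < x then 1 else if x < 0 then -1 else 0) :
    ∫ ω, sgn (X ω) * sgn (Y ω) ∂μ = (2 / Real.pi) * Real.arcsin ρ := by
  have hsg : sgn = ArcsineAux.sg := funext hsgn
  subst hsg
  rw [hX, hY]
  set s : ℝ := Real.sqrt (1 - ρ ^ 2) with hs
  set f : ℝ × ℝ → ℝ := fun p => ArcsineAux.sg p.1 * ArcsineAux.sg (ρ * p.1 + s * p.2) with hf
  have hfm : Measurable f :=
    (ArcsineAux.measurable_sg.comp measurable_fst).mul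
      (ArcsineAux.measurable_sg.comp
        ((measurable_fst.const_mul ρ).add (measurable_snd.const_mul s)))
  have hpair : μ.map (fun ω => (Z₁ ω, Z₂ ω)) = (gaussianReal 0 1).prod (gaussianReal 0 1) := by
    have h := (indepFun_iff_map_prod_eq_prod_map_map hZ₁.aemeasurable hZ₂.aemeasurable).mp hindep
    rw [h, hlaw₁, hlaw₂]
  have key : ∫ ω, f (Z₁ ω, Z₂ ω) ∂μ
      = ∫ p : ℝ × ℝ, f p ∂((gaussianReal 0 1).prod (gaussianReal 0 1)) := by
    rw [← hpair]
    exact (integral_map (hZ₁.prodMk hZ₂).aemeasurable hfm.aestronglyMeasurable).symm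
  have hmain := ArcsineAux.main ρ hρ.1 hρ.2
  rw [← hmain, ← key]
end

section
/- Let c > 0, let F : ℤ → ℂ be finitely supported, let β ∈ ℝ and σ₁, σ₂ ≥ 0, and for ρ ∈ [-1, 1] define Ψ(ρ) = Σ_{q ∈ ℤ} Σ_{r ∈ ℤ} F_q F_r e^{i (q + r) π β / c} exp(-(π²/(2c²)) (σ₁² q² + 2 σ₁ σ₂ q r ρ + σ₂² r²)). Then Ψ is given by an absolutely convergent power series in ρ on [-1, 1]; that is, there exist complex coefficients a_k with Σ_{k} |a_k| < ∞ such that Ψ(ρ) = Σ_{k=0}^{∞} a_k ρ^k for all ρ ∈ [-1, 1], and one may take a_k = ((-1)^k (σ₁ σ₂)^k / k!) · [Σ_{q} F_q e^{i q π β / c} e^{-(π²/(2c²)) σ₁² q²} (q π / c)^k] · [Σ_{r} F_r e^{i r π β / c} e^{-(π²/(2c²)) σ₂² r²} (r π / c)^k]. -/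
open Complex Real

set_option maxHeartbeats 1000000 in
/-- The output correlation `Ψ(ρ)` of a nonlinearity with finitely supported Fourier
coefficients `F`, driven by a jointly Gaussian pair with variances `σ₁², σ₂²`, common
bias `β` and correlation coefficient `ρ`, is given on `[-1, 1]` by an absolutely
convergent power series in `ρ`, with explicit coefficients `aₖ`. -/
theorem stmt_9
    (c : ℝ) (hc : 0 < c)
    (F : ℤ → ℂ) (hF : (Function.support F).Finite)
    (β : ℝ) (σ₁ σ₂ : ℝ) (hσ₁ : 0 ≤ σ₁) (hσ₂ : 0 ≤ σ₂)
    (Ψ : ℝ → ℂ)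
    (hΨ : ∀ ρ : ℝ, Ψ ρ = ∑' q : ℤ, ∑' r : ℤ, F q * F r *
      Complex.exp (Complex.I * (((q : ℂ) + (r : ℂ)) * (Real.pi : ℂ) * (β : ℂ) / (c : ℂ))) *
      (Real.exp (-(Real.pi ^ 2 / (2 * c ^ 2)) *
        (σ₁ ^ 2 * (q : ℝ) ^ 2 + 2 * σ₁ * σ₂ * (q : ℝ) * (r : ℝ) * ρ + σ₂ ^ 2 * (r : ℝ) ^ 2)) : ℂ)) :
    ∃ a : ℕ → ℂ,
      Summable (fun k : ℕ => ‖a k‖) ∧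
      (∀ ρ : ℝ, ρ ∈ Set.Icc (-1 : ℝ) 1 → Ψ ρ = ∑' k : ℕ, a k * ((ρ : ℂ) ^ k)) ∧
      (∀ k : ℕ, a k = ((-1 : ℂ) ^ k * ((σ₁ * σ₂ : ℝ) : ℂ) ^ k / (k.factorial : ℂ)) *
        (∑' q : ℤ, F q * Complex.exp (Complex.I * ((q : ℂ) * (Real.pi : ℂ) * (β : ℂ) / (c : ℂ))) *
            (Real.exp (-(Real.pi ^ 2 / (2 * c ^ 2)) * (σ₁ ^ 2 * (q : ℝ) ^ 2)) : ℂ) *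
            (((q : ℝ) * Real.pi / c : ℝ) : ℂ) ^ k) *
        (∑' r : ℤ, F r * Complex.exp (Complex.I * ((r : ℂ) * (Real.pi : ℂ) * (β : ℂ) / (c : ℂ))) *
            (Real.exp (-(Real.pi ^ 2 / (2 * c ^ 2)) * (σ₂ ^ 2 * (r : ℝ) ^ 2)) : ℂ) *
            (((r : ℝ) * Real.pi / c : ℝ) : ℂ) ^ k)) := by
  classical
  set s : Finset ℤ := hF.toFinset with hs
  have hmem : ∀ q : ℤ, q ∉ s → F q = 0 := by
    intro q hq
    by_contra h
    exact hq (hF.mem_toFinset.mpr h)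
  set x : ℤ → ℂ := fun q => (((q : ℝ) * Real.pi / c : ℝ) : ℂ) with hxdef
  set G₁ : ℤ → ℂ := fun q =>
    F q * Complex.exp (Complex.I * ((q : ℂ) * (Real.pi : ℂ) * (β : ℂ) / (c : ℂ))) *
      (Real.exp (-(Real.pi ^ 2 / (2 * c ^ 2)) * (σ₁ ^ 2 * (q : ℝ) ^ 2)) : ℂ) with hG₁def
  set G₂ : ℤ → ℂ := fun r =>
    F r * Complex.exp (Complex.I * ((r : ℂ) * (Real.pi : ℂ) * (β : ℂ) / (c : ℂ))) *
      (Real.exp (-(Real.pi ^ 2 / (2 * c ^ 2)) * (σ₂ ^ 2 * (r : ℝ) ^ 2)) : ℂ) with hG₂def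
  set a : ℕ → ℂ := fun k =>
    ((-1 : ℂ) ^ k * ((σ₁ * σ₂ : ℝ) : ℂ) ^ k / (k.factorial : ℂ)) *
      (∑ q ∈ s, G₁ q * x q ^ k) * (∑ r ∈ s, G₂ r * x r ^ k) with hadef
  -- tsums in the stated formula reduce to finite sums
  have hsum1 : ∀ k : ℕ, (∑' q : ℤ, G₁ q * x q ^ k) = ∑ q ∈ s, G₁ q * x q ^ k := by
    intro k
    refine tsum_eq_sum ?_
    intro q hq
    simp [hG₁def, hmem q hq]
  have hsum2 : ∀ k : ℕ, (∑' r : ℤ, G₂ r * x r ^ k) = ∑ r ∈ s, G₂ r * x r ^ k := by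
    intro k
    refine tsum_eq_sum ?_
    intro r hr
    simp [hG₂def, hmem r hr]
  refine ⟨a, ?_, ?_, ?_⟩
  · -- summability of ‖a k‖
    set M : ℝ := ∑ q ∈ s, ‖x q‖ with hM
    have hMle : ∀ q ∈ s, ‖x q‖ ≤ M :=
      fun q hq => Finset.single_le_sum (fun i _ => norm_nonneg (x i)) hq
    have hM0 : 0 ≤ M := Finset.sum_nonneg fun i _ => norm_nonneg (x i)
    set C₁ : ℝ := ∑ q ∈ s, ‖G₁ q‖ with hC₁
    set C₂ : ℝ := ∑ r ∈ s, ‖G₂ r‖ with hC₂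
    have hC₁0 : 0 ≤ C₁ := Finset.sum_nonneg fun i _ => norm_nonneg _
    have hC₂0 : 0 ≤ C₂ := Finset.sum_nonneg fun i _ => norm_nonneg _
    have key : ∀ k : ℕ, ‖a k‖ ≤ C₁ * C₂ * ((σ₁ * σ₂ * M ^ 2) ^ k / k.factorial) := by
      intro k
      have h1 : ‖∑ q ∈ s, G₁ q * x q ^ k‖ ≤ C₁ * M ^ k := by
        calc ‖∑ q ∈ s, G₁ q * x q ^ k‖ ≤ ∑ q ∈ s, ‖G₁ q * x q ^ k‖ := norm_sum_le _ _
          _ ≤ ∑ q ∈ s, ‖G₁ q‖ * M ^ k := by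
              refine Finset.sum_le_sum fun q hq => ?_
              rw [norm_mul, norm_pow]
              exact mul_le_mul_of_nonneg_left
                (pow_le_pow_left₀ (norm_nonneg _) (hMle q hq) k) (norm_nonneg _)
          _ = C₁ * M ^ k := by rw [hC₁, Finset.sum_mul]
      have h2 : ‖∑ r ∈ s, G₂ r * x r ^ k‖ ≤ C₂ * M ^ k := by
        calc ‖∑ r ∈ s, G₂ r * x r ^ k‖ ≤ ∑ r ∈ s, ‖G₂ r * x r ^ k‖ := norm_sum_le _ _
          _ ≤ ∑ r ∈ s, ‖G₂ r‖ * M ^ k := by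
              refine Finset.sum_le_sum fun r hr => ?_
              rw [norm_mul, norm_pow]
              exact mul_le_mul_of_nonneg_left
                (pow_le_pow_left₀ (norm_nonneg _) (hMle r hr) k) (norm_nonneg _)
          _ = C₂ * M ^ k := by rw [hC₂, Finset.sum_mul]
      have hcoef : ‖((-1 : ℂ) ^ k * ((σ₁ * σ₂ : ℝ) : ℂ) ^ k / (k.factorial : ℂ))‖
          = (σ₁ * σ₂) ^ k / k.factorial := by
        rw [norm_div, norm_mul, norm_pow, norm_pow, norm_neg, norm_one, one_pow, one_mul]
        rw [Complex.norm_real, Real.norm_of_nonneg (mul_nonneg hσ₁ hσ₂)]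
        simp [Complex.norm_natCast]
      have step1 : ‖a k‖ = ‖((-1 : ℂ) ^ k * ((σ₁ * σ₂ : ℝ) : ℂ) ^ k / (k.factorial : ℂ))‖ *
          ‖∑ q ∈ s, G₁ q * x q ^ k‖ * ‖∑ r ∈ s, G₂ r * x r ^ k‖ := by
        simp only [hadef]
        rw [norm_mul, norm_mul]
      have hd0 : (0:ℝ) ≤ (σ₁ * σ₂) ^ k / k.factorial :=
        div_nonneg (pow_nonneg (mul_nonneg hσ₁ hσ₂) k) (Nat.cast_nonneg _)
      have step2 : ‖((-1 : ℂ) ^ k * ((σ₁ * σ₂ : ℝ) : ℂ) ^ k / (k.factorial : ℂ))‖ *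
          ‖∑ q ∈ s, G₁ q * x q ^ k‖ * ‖∑ r ∈ s, G₂ r * x r ^ k‖
          ≤ ((σ₁ * σ₂) ^ k / k.factorial) * (C₁ * M ^ k) * (C₂ * M ^ k) := by
        rw [hcoef]
        refine mul_le_mul (mul_le_mul le_rfl h1 (norm_nonneg _) hd0) h2 (norm_nonneg _) ?_
        exact mul_nonneg hd0 (mul_nonneg hC₁0 (pow_nonneg hM0 k))
      have step3 : ((σ₁ * σ₂) ^ k / k.factorial) * (C₁ * M ^ k) * (C₂ * M ^ k)
          = C₁ * C₂ * ((σ₁ * σ₂ * M ^ 2) ^ k / k.factorial) := by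
        rw [mul_pow, mul_pow]; ring
      rw [step1]
      rw [step3] at step2
      exact step2
    refine Summable.of_nonneg_of_le (fun k => norm_nonneg _) key ?_
    have := (Real.summable_pow_div_factorial (σ₁ * σ₂ * M ^ 2)).mul_left (C₁ * C₂)
    simpa using this
  · -- power series expansion
    intro ρ _
    -- the complex variable z q r
    set z : ℤ → ℤ → ℂ := fun q r => -(((σ₁ * σ₂ : ℝ) : ℂ) * x q * x r * (ρ : ℂ)) with hzdef
    have hzre : ∀ q r : ℤ, z q r =
        ((-(σ₁ * σ₂ * ((q : ℝ) * Real.pi / c) * ((r : ℝ) * Real.pi / c) * ρ) : ℝ) : ℂ) := by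
      intro q r
      rw [hzdef, hxdef]
      push_cast
      ring
    have hterm : ∀ q r : ℤ, F q * F r *
        Complex.exp (Complex.I * (((q : ℂ) + (r : ℂ)) * (Real.pi : ℂ) * (β : ℂ) / (c : ℂ))) *
        (Real.exp (-(Real.pi ^ 2 / (2 * c ^ 2)) *
          (σ₁ ^ 2 * (q : ℝ) ^ 2 + 2 * σ₁ * σ₂ * (q : ℝ) * (r : ℝ) * ρ + σ₂ ^ 2 * (r : ℝ) ^ 2)) : ℂ)
        = G₁ q * G₂ r * Complex.exp (z q r) := by
      intro q r
      have hsplit : -(Real.pi ^ 2 / (2 * c ^ 2)) *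
          (σ₁ ^ 2 * (q : ℝ) ^ 2 + 2 * σ₁ * σ₂ * (q : ℝ) * (r : ℝ) * ρ + σ₂ ^ 2 * (r : ℝ) ^ 2)
          = (-(Real.pi ^ 2 / (2 * c ^ 2)) * (σ₁ ^ 2 * (q : ℝ) ^ 2))
            + (-(σ₁ * σ₂ * ((q : ℝ) * Real.pi / c) * ((r : ℝ) * Real.pi / c) * ρ))
            + (-(Real.pi ^ 2 / (2 * c ^ 2)) * (σ₂ ^ 2 * (r : ℝ) ^ 2)) := by
        field_simp
        ring
      rw [hsplit, Real.exp_add, Real.exp_add, hzre q r, hG₁def, hG₂def]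
      have hphase : Complex.I * (((q : ℂ) + (r : ℂ)) * (Real.pi : ℂ) * (β : ℂ) / (c : ℂ))
          = Complex.I * ((q : ℂ) * (Real.pi : ℂ) * (β : ℂ) / (c : ℂ))
            + Complex.I * ((r : ℂ) * (Real.pi : ℂ) * (β : ℂ) / (c : ℂ)) := by ring
      rw [hphase, Complex.exp_add, ← Complex.ofReal_exp]
      push_cast
      ring
    -- each inner exp expands into a series
    have hexp : ∀ q r : ℤ, G₁ q * G₂ r * Complex.exp (z q r)
        = ∑' k : ℕ, G₁ q * G₂ r * (z q r ^ k / k.factorial) := by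
      intro q r
      rw [Complex.exp_eq_exp_ℂ, NormedSpace.exp_eq_tsum_div, tsum_mul_left]
    have hsummable : ∀ q r : ℤ, Summable (fun k : ℕ => G₁ q * G₂ r * (z q r ^ k / k.factorial)) :=
      fun q r => by simpa using (NormedSpace.expSeries_div_summable (z q r)).mul_left (G₁ q * G₂ r)
    rw [hΨ ρ]
    have h1 : (∑' q : ℤ, ∑' r : ℤ, F q * F r *
        Complex.exp (Complex.I * (((q : ℂ) + (r : ℂ)) * (Real.pi : ℂ) * (β : ℂ) / (c : ℂ))) *
        (Real.exp (-(Real.pi ^ 2 / (2 * c ^ 2)) *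
          (σ₁ ^ 2 * (q : ℝ) ^ 2 + 2 * σ₁ * σ₂ * (q : ℝ) * (r : ℝ) * ρ + σ₂ ^ 2 * (r : ℝ) ^ 2)) : ℂ))
        = ∑ q ∈ s, ∑ r ∈ s, G₁ q * G₂ r * Complex.exp (z q r) := by
      have inner : ∀ q : ℤ, (∑' r : ℤ, F q * F r *
          Complex.exp (Complex.I * (((q : ℂ) + (r : ℂ)) * (Real.pi : ℂ) * (β : ℂ) / (c : ℂ))) *
          (Real.exp (-(Real.pi ^ 2 / (2 * c ^ 2)) *
            (σ₁ ^ 2 * (q : ℝ) ^ 2 + 2 * σ₁ * σ₂ * (q : ℝ) * (r : ℝ) * ρ + σ₂ ^ 2 * (r : ℝ) ^ 2)) : ℂ))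
          = ∑ r ∈ s, G₁ q * G₂ r * Complex.exp (z q r) := by
        intro q
        rw [show (∑ r ∈ s, G₁ q * G₂ r * Complex.exp (z q r)) = ∑ r ∈ s, F q * F r *
            Complex.exp (Complex.I * (((q : ℂ) + (r : ℂ)) * (Real.pi : ℂ) * (β : ℂ) / (c : ℂ))) *
            (Real.exp (-(Real.pi ^ 2 / (2 * c ^ 2)) *
              (σ₁ ^ 2 * (q : ℝ) ^ 2 + 2 * σ₁ * σ₂ * (q : ℝ) * (r : ℝ) * ρ + σ₂ ^ 2 * (r : ℝ) ^ 2)) : ℂ)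
            from Finset.sum_congr rfl fun r _ => (hterm q r).symm]
        refine tsum_eq_sum ?_
        intro r hr
        simp [hmem r hr]
      rw [tsum_congr inner]
      refine tsum_eq_sum ?_
      intro q hq
      refine Finset.sum_eq_zero fun r _ => ?_
      simp [hG₁def, hmem q hq]
    rw [h1]
    -- swap finite sums with tsum over k
    have h2 : (∑ q ∈ s, ∑ r ∈ s, G₁ q * G₂ r * Complex.exp (z q r))
        = ∑' k : ℕ, ∑ q ∈ s, ∑ r ∈ s, G₁ q * G₂ r * (z q r ^ k / k.factorial) := by
      rw [Finset.sum_congr rfl fun q _ => Finset.sum_congr rfl fun r _ => hexp q r]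
      rw [Finset.sum_congr rfl fun q (_ : q ∈ s) =>
        (Summable.tsum_finsetSum (fun r (_ : r ∈ s) => hsummable q r)).symm]
      exact (Summable.tsum_finsetSum fun q (_ : q ∈ s) =>
        summable_sum fun r _ => hsummable q r).symm
    rw [h2]
    refine tsum_congr fun k => ?_
    have hz : ∀ q r : ℤ, G₁ q * G₂ r * (z q r ^ k / (k.factorial : ℂ))
        = ((-1 : ℂ) ^ k * ((σ₁ * σ₂ : ℝ) : ℂ) ^ k / (k.factorial : ℂ) * (ρ : ℂ) ^ k) *
          ((G₁ q * x q ^ k) * (G₂ r * x r ^ k)) := by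
      intro q r
      simp only [hzdef]
      ring
    trans (((-1 : ℂ) ^ k * ((σ₁ * σ₂ : ℝ) : ℂ) ^ k / (k.factorial : ℂ) * (ρ : ℂ) ^ k) *
        ((∑ q ∈ s, G₁ q * x q ^ k) * (∑ r ∈ s, G₂ r * x r ^ k)))
    · rw [Finset.sum_mul_sum, Finset.mul_sum]
      refine Finset.sum_congr rfl fun q _ => ?_
      rw [Finset.mul_sum]
      exact Finset.sum_congr rfl fun r _ => hz q r
    · simp only [hadef]
      ring
  · -- coefficient formula
    intro k
    rw [hadef, hsum1 k, hsum2 k]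
end
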